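/- Let G be a finite connected undirected graph with closed neighbourhoods N_i, and let x be a vector of strictly positive reals. For every vector p of nonnegative reals, ∑_i x_i^2 / (p_i / ∑_{j ∈ N_i} p_j) ≥ ∑_i x_i^2 / (x_i / ∑_{j ∈ N_i} x_j), where terms with p_i = 0 are interpreted as +∞ (or the inequality is restricted to p with all p_i > 0). That is, the rates φ_i(x) = x_i/∑_{j∈N_i} x_j are 2-fair within the class of rate vectors achievable by the CSMA priority scheme. -/

import Mathlib

/-!
Writing `μ_i(q) = q_i / ∑_{j ∈ N_i} q_j`, the objective is `∑_i x_i² / μ_i(q) = ∑_i ∑_{j ∈ N_i} x_i² q_j / q_i`.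
Because `j ∈ N_i ↔ i ∈ N_j`, the double sum runs over a symmetric set of ordered pairs, so the terms
for `(i, j)` and `(j, i)` can be paired; by AM-GM each pair is at least `2 x_i x_j`, with equality at
`q = x`. Hence the objective is minimised at `q = x`, where it equals `∑_i ∑_{j ∈ N_i} x_i x_j`.
-/

open Finset

lemma two_mul_mul_le_sq_mul_div_add_sq_mul_div {q r : ℝ} (hq : 0 < q) (hr : 0 < r) (a b : ℝ) :
    2 * (a * b) ≤ a ^ 2 * r / q + b ^ 2 * q / r := by
  rw [div_add_div _ _ hq.ne' hr.ne', le_div_iff₀ (mul_pos hq hr)]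
  nlinarith [two_mul_le_add_sq (a * r) (b * q)]

section SymmetricNeighbourhoods

variable {V : Type*} (N : V → Finset V)

lemma sum_sum_mul_le_sum_sum_sq_mul_div [Fintype V] (hN : ∀ i j, j ∈ N i ↔ i ∈ N j)
    (a : V → ℝ) {q : V → ℝ} (hq : ∀ i, 0 < q i) :
    ∑ i, ∑ j ∈ N i, a i * a j ≤ ∑ i, ∑ j ∈ N i, a i ^ 2 * q j / q i := by
  have hswap : ∑ i, ∑ j ∈ N i, a j ^ 2 * q i / q j = ∑ i, ∑ j ∈ N i, a i ^ 2 * q j / q i :=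
    sum_comm' fun i j ↦ by simp [hN i j]
  have hpair : ∑ i, ∑ j ∈ N i, 2 * (a i * a j)
      ≤ ∑ i, ∑ j ∈ N i, (a i ^ 2 * q j / q i + a j ^ 2 * q i / q j) :=
    sum_le_sum fun i _ ↦ sum_le_sum fun j _ ↦
      two_mul_mul_le_sq_mul_div_add_sq_mul_div (hq i) (hq j) (a i) (a j)
  have htwo : ∑ i, ∑ j ∈ N i, 2 * (a i * a j) = 2 * ∑ i, ∑ j ∈ N i, a i * a j := by
    simp only [mul_sum]
  rw [htwo] at hpair
  simp only [sum_add_distrib, hswap] at hpair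
  linarith

lemma sq_div_div_sum_eq_sum_sq_mul_div (a q : V → ℝ) (i : V) :
    a i ^ 2 / (q i / ∑ j ∈ N i, q j) = ∑ j ∈ N i, a i ^ 2 * q j / q i := by
  rw [div_div_eq_mul_div, mul_sum, sum_div]

lemma sq_div_div_sum_self (a : V → ℝ) (i : V) :
    a i ^ 2 / (a i / ∑ j ∈ N i, a j) = ∑ j ∈ N i, a i * a j := by
  rw [← mul_sum]
  rcases eq_or_ne (a i) 0 with h | h
  · simp [h]
  · field_simp

end SymmetricNeighbourhoods

lemma SimpleGraph.mem_insert_neighborFinset_comm {V : Type*} [Fintype V] [DecidableEq V]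
    (G : SimpleGraph V) [DecidableRel G.Adj] (i j : V) :
    j ∈ insert i (G.neighborFinset i) ↔ i ∈ insert j (G.neighborFinset j) := by
  simp only [mem_insert, SimpleGraph.mem_neighborFinset, eq_comm, G.adj_comm]

theorem stmt_12_general {V : Type*} [Fintype V] [DecidableEq V]
    (G : SimpleGraph V) [DecidableRel G.Adj]
    (x : V → ℝ)
    (p : V → ℝ) (hp : ∀ i, 0 < p i) :
    ∑ i, x i ^ 2 / (p i / ∑ j ∈ insert i (G.neighborFinset i), p j) ≥
      ∑ i, x i ^ 2 / (x i / ∑ j ∈ insert i (G.neighborFinset i), x j) := by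
  set N : V → Finset V := fun i ↦ insert i (G.neighborFinset i)
  calc ∑ i, x i ^ 2 / (x i / ∑ j ∈ N i, x j)
      = ∑ i, ∑ j ∈ N i, x i * x j := sum_congr rfl fun i _ ↦ sq_div_div_sum_self N x i
    _ ≤ ∑ i, ∑ j ∈ N i, x i ^ 2 * p j / p i :=
      sum_sum_mul_le_sum_sum_sq_mul_div N G.mem_insert_neighborFinset_comm x hp
    _ = ∑ i, x i ^ 2 / (p i / ∑ j ∈ N i, p j) :=
      sum_congr rfl fun i _ ↦ (sq_div_div_sum_eq_sum_sq_mul_div N x p i).symm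

theorem stmt_12 {V : Type*} [Fintype V] [DecidableEq V]
    (G : SimpleGraph V) [DecidableRel G.Adj] (hconn : G.Connected)
    (x : V → ℝ) (hx : ∀ i, 0 < x i)
    (p : V → ℝ) (hp : ∀ i, 0 < p i) :
    ∑ i, x i ^ 2 / (p i / ∑ j ∈ insert i (G.neighborFinset i), p j) ≥
      ∑ i, x i ^ 2 / (x i / ∑ j ∈ insert i (G.neighborFinset i), x j) :=
  stmt_12_general G x p hp
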